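/- Every λμ-term in normal form is typeable: if N is a normal form (generated by N ::= x N₁…Nₖ | λx.N | μα.[β]N), then there exist Γ, Δ and a type κ→ν such that Γ ⊢ N : κ→ν | Δ in the intersection type system. -/
import Mathlib


/-- λμ-terms: variables, abstraction, application, and μ-abstraction
    `mu a b M` represents μα.[β]M (a = α, b = β). -/
inductive Trm : Type
  | var : ℕ → Trm
  | lam : ℕ → Trm → Trm
  | app : Trm → Trm → Trm
  | mu  : ℕ → ℕ → Trm → Trm
deriving DecidableEq

/-- Term substitution M[N/x] (Barendregt convention: no capture). -/
def subst : Trm → ℕ → Trm → Trm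
  | .var y, x, N => if y = x then N else .var y
  | .lam y M, x, N => .lam y (subst M x N)
  | .app M P, x, N => .app (subst M x N) (subst P x N)
  | .mu a b M, x, N => .mu a b (subst M x N)

/-- Structural substitution M{α ⇐ N}: every named subterm [α]P becomes [α]PN. -/
def ssub : Trm → ℕ → Trm → Trm
  | .var y, _, _ => .var y
  | .lam y M, a, N => .lam y (ssub M a N)
  | .app M P, a, N => .app (ssub M a N) (ssub P a N)
  | .mu b c M, a, N =>
      .mu b c (if c = a then .app (ssub M a N) N else ssub M a N)

/-- Iterated structural substitution M{α ⇐ N₁}…{α ⇐ Nₘ}. -/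
def ssubs (a : ℕ) (M : Trm) (Ns : List Trm) : Trm :=
  Ns.foldl (fun T N => ssub T a N) M

/-- Application of a term to a stack of terms: M L₁ … Lₖ. -/
def appList (M : Trm) (L : List Trm) : Trm := L.foldl .app M

/-- One-step reduction: logical (β) and structural (μ) rules, compatible closure. -/
inductive Red : Trm → Trm → Prop
  | beta (x : ℕ) (M N : Trm) : Red (.app (.lam x M) N) (subst M x N)
  | mu (a b : ℕ) (M N : Trm) : Red (.app (.mu a b M) N) (ssub (.mu a b M) a N)
  | appL {M M' : Trm} (N : Trm) : Red M M' → Red (.app M N) (.app M' N)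
  | appR (M : Trm) {N N' : Trm} : Red N N' → Red (.app M N) (.app M N')
  | lam (x : ℕ) {M M' : Trm} : Red M M' → Red (.lam x M) (.lam x M')
  | muC (a b : ℕ) {M M' : Trm} : Red M M' → Red (.mu a b M) (.mu a b M')

/-- Strong normalisation: no infinite reduction sequence from M. -/
def SN (M : Trm) : Prop := Acc (fun p q => Red q p) M

/-- Stacks of strongly normalising terms. -/
def SNs (L : List Trm) : Prop := ∀ P ∈ L, SN P

mutual
/-- Term types δ ::= ν | ω→ν | κ→ν | δ∧δ. -/
inductive TyD : Type
  | nu : TyD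
  | arrOmega : TyD
  | arr : TyC → TyD
  | inter : TyD → TyD → TyD
/-- Continuation-stack types κ ::= δ×ω | δ×κ | κ∧κ. -/
inductive TyC : Type
  | prodOmega : TyD → TyC
  | prod : TyD → TyC → TyC
  | inter : TyC → TyC → TyC
end

mutual
/-- The subtyping preorder on term types. -/
inductive LeD : TyD → TyD → Prop
  | refl (d) : LeD d d
  | trans {d1 d2 d3} : LeD d1 d2 → LeD d2 d3 → LeD d1 d3
  | interL (d1 d2) : LeD (.inter d1 d2) d1
  | interR (d1 d2) : LeD (.inter d1 d2) d2
  | glb {d d1 d2} : LeD d d1 → LeD d d2 → LeD d (.inter d1 d2)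
  | nuOmega : LeD .nu .arrOmega
  | omegaNu : LeD .arrOmega .nu
  | arr {k1 k2} : LeC k2 k1 → LeD (.arr k1) (.arr k2)
/-- The subtyping preorder on continuation-stack types. -/
inductive LeC : TyC → TyC → Prop
  | refl (k) : LeC k k
  | trans {k1 k2 k3} : LeC k1 k2 → LeC k2 k3 → LeC k1 k3
  | interL (k1 k2) : LeC (.inter k1 k2) k1
  | interR (k1 k2) : LeC (.inter k1 k2) k2
  | glb {k k1 k2} : LeC k k1 → LeC k k2 → LeC k (.inter k1 k2)
  | drop (d1 d2) : LeC (.prod d1 (.prodOmega d2)) (.prodOmega d1)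
  | distOmega (d1 d2 k) :
      LeC (.inter (.prodOmega d1) (.prod d2 k)) (.prod (.inter d1 d2) k)
  | dist (d1 d2 k1 k2) :
      LeC (.inter (.prod d1 k1) (.prod d2 k2))
          (.prod (.inter d1 d2) (.inter k1 k2))
  | monoOmega {d1 d2} : LeD d1 d2 → LeC (.prodOmega d1) (.prodOmega d2)
  | mono {d1 d2 k1 k2} : LeD d1 d2 → LeC k1 k2 → LeC (.prod d1 k1) (.prod d2 k2)
end

mutual
/-- Interpretation of term types as sets of terms. -/
def semD : TyD → Set Trm
  | .nu => {M | SN M}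
  | .arrOmega => {M | SN M}
  | .arr k => {M | ∀ L ∈ semC k, SN (appList M L)}
  | .inter d1 d2 => semD d1 ∩ semD d2
/-- Interpretation of continuation-stack types as sets of stacks. -/
def semC : TyC → Set (List Trm)
  | .prodOmega d => {l | ∃ N L, l = N :: L ∧ N ∈ semD d ∧ SNs L}
  | .prod d k => {l | ∃ N L, l = N :: L ∧ N ∈ semD d ∧ L ∈ semC k}
  | .inter k1 k2 => semC k1 ∩ semC k2
end

/-- Minimal length ‖κ‖ of stacks in ⟦κ⟧. -/
def lenC : TyC → ℕ
  | .prodOmega _ => 1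
  | .prod _ k => 1 + lenC k
  | .inter k1 k2 => max (lenC k1) (lenC k2)

abbrev Ctx := ℕ → Option TyD
abbrev NCtx := ℕ → Option TyC

/-- The intersection type assignment system for λμ.
    In the (abs)/(app) rules κ may be a continuation type or ω, hence two forms. -/
inductive Typ : Ctx → Trm → TyD → NCtx → Prop
  | ax {Γ : Ctx} {x δ} (Δ : NCtx) : Γ x = some δ → Typ Γ (.var x) δ Δ
  | abs {Γ x δ κ M Δ} : Typ (Function.update Γ x (some δ)) M (.arr κ) Δ →
      Typ Γ (.lam x M) (.arr (.prod δ κ)) Δ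
  | absOmega {Γ x δ M Δ} : Typ (Function.update Γ x (some δ)) M .arrOmega Δ →
      Typ Γ (.lam x M) (.arr (.prodOmega δ)) Δ
  | app {Γ M N δ κ Δ} : Typ Γ M (.arr (.prod δ κ)) Δ → Typ Γ N δ Δ →
      Typ Γ (.app M N) (.arr κ) Δ
  | appOmega {Γ M N δ Δ} : Typ Γ M (.arr (.prodOmega δ)) Δ → Typ Γ N δ Δ →
      Typ Γ (.app M N) .arrOmega Δ
  | muNe {Γ M a b κ κ' Δ} : a ≠ b →
      Typ Γ M (.arr κ') (Function.update (Function.update Δ b (some κ')) a (some κ)) →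
      Typ Γ (.mu a b M) (.arr κ) (Function.update Δ b (some κ'))
  | muEq {Γ M a κ Δ} : Typ Γ M (.arr κ) (Function.update Δ a (some κ)) →
      Typ Γ (.mu a a M) (.arr κ) Δ
  | sub {Γ M δ δ' Δ} : Typ Γ M δ Δ → LeD δ δ' → Typ Γ M δ' Δ
  | inter {Γ M δ1 δ2 Δ} : Typ Γ M δ1 Δ → Typ Γ M δ2 Δ → Typ Γ M (.inter δ1 δ2) Δ

/-- Free variables. -/
def fv : Trm → Set ℕ
  | .var x => {x}
  | .lam x M => fv M \ {x}
  | .app M N => fv M ∪ fv N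
  | .mu _ _ M => fv M

/-- Free names. -/
def fn : Trm → Set ℕ
  | .var _ => ∅
  | .lam _ M => fn M
  | .app M N => fn M ∪ fn N
  | .mu a b M => (fn M ∪ {b}) \ {a}

/-- Bound variables. -/
def bv : Trm → Set ℕ
  | .var _ => ∅
  | .lam x M => {x} ∪ bv M
  | .app M N => bv M ∪ bv N
  | .mu _ _ M => bv M

/-- Bound names. -/
def bn : Trm → Set ℕ
  | .var _ => ∅
  | .lam _ M => bn M
  | .app M N => bn M ∪ bn N
  | .mu a _ M => {a} ∪ bn M

/-- Γ' ≤ Γ on variable contexts. -/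
def CtxLe (Γ' Γ : Ctx) : Prop :=
  ∀ x δ, Γ x = some δ → ∃ δ', Γ' x = some δ' ∧ LeD δ' δ

/-- Δ' ≤ Δ on name contexts. -/
def NCtxLe (Δ' Δ : NCtx) : Prop :=
  ∀ a κ, Δ a = some κ → ∃ κ', Δ' a = some κ' ∧ LeC κ' κ

/-- Application of a parallel substitution (ξv on variables, ξn on names;
    default ξv x = var x / ξn a = [] encodes "not in the domain"). -/
def psub (ξv : ℕ → Trm) (ξn : ℕ → List Trm) : Trm → Trm
  | .var x => ξv x
  | .lam x M => .lam x (psub ξv ξn M)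
  | .app M N => .app (psub ξv ξn M) (psub ξv ξn N)
  | .mu a b M => .mu a b (appList (psub ξv ξn M) (ξn b))

/-- Normal forms: N ::= x N₁…Nₖ | λx.N | μα.[β]N. -/
inductive Nf : Trm → Prop
  | varApp (x : ℕ) (Ns : List Trm) : (∀ N ∈ Ns, Nf N) → Nf (appList (.var x) Ns)
  | lam (x : ℕ) {M} : Nf M → Nf (.lam x M)
  | mu (a b : ℕ) {M} : Nf M → Nf (.mu a b M)

/-- Simple types (logical formulas) A ::= φ | A → B. -/
inductive SType : Type
  | base : ℕ → SType
  | arrow : SType → SType → SType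

abbrev SCtx := ℕ → Option SType

/-- Parigot's simply-typed λμ-calculus (propositional fragment). -/
inductive STyp : SCtx → Trm → SType → SCtx → Prop
  | ax {Γ : SCtx} {x A} (Δ : SCtx) : Γ x = some A → STyp Γ (.var x) A Δ
  | arrI {Γ x A B M Δ} : STyp (Function.update Γ x (some A)) M B Δ →
      STyp Γ (.lam x M) (.arrow A B) Δ
  | arrE {Γ M N A B Δ} : STyp Γ M (.arrow A B) Δ → STyp Γ N A Δ →
      STyp Γ (.app M N) B Δ
  | mu1 {Γ M a A Δ} : STyp Γ M A (Function.update Δ a (some A)) →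
      STyp Γ (.mu a a M) A Δ
  | mu2 {Γ M a b A B Δ} : a ≠ b →
      STyp Γ M B (Function.update (Function.update Δ b (some B)) a (some A)) →
      STyp Γ (.mu a b M) A (Function.update Δ b (some B))

/-- Translation of formulas to continuation-stack types. -/
def transC : SType → TyC
  | .base _ => .prodOmega .nu
  | .arrow A B => .prod (.arr (transC A)) (transC B)

/-- Translation of formulas to term types. -/
def transD (A : SType) : TyD := .arr (transC A)

section Aux

/-- Pointwise intersection of variable contexts. -/
def ctxInter (Γ₁ Γ₂ : Ctx) : Ctx := fun x =>
  match Γ₁ x, Γ₂ x with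
  | some d1, some d2 => some (d1.inter d2)
  | some d1, none => some d1
  | none, o => o

/-- Pointwise intersection of name contexts. -/
def nctxInter (Δ₁ Δ₂ : NCtx) : NCtx := fun a =>
  match Δ₁ a, Δ₂ a with
  | some k1, some k2 => some (k1.inter k2)
  | some k1, none => some k1
  | none, o => o

lemma ctxInter_le_left (Γ₁ Γ₂ : Ctx) : CtxLe (ctxInter Γ₁ Γ₂) Γ₁ := by
  intro x δ h
  unfold ctxInter
  cases h2 : Γ₂ x <;> simp [h, h2]
  · exact LeD.refl δ
  · exact LeD.interL _ _

lemma ctxInter_le_right (Γ₁ Γ₂ : Ctx) : CtxLe (ctxInter Γ₁ Γ₂) Γ₂ := by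
  intro x δ h
  unfold ctxInter
  cases h1 : Γ₁ x <;> simp [h, h1]
  · exact LeD.refl δ
  · exact LeD.interR _ _

lemma nctxInter_le_left (Δ₁ Δ₂ : NCtx) : NCtxLe (nctxInter Δ₁ Δ₂) Δ₁ := by
  intro a κ h
  unfold nctxInter
  cases h2 : Δ₂ a <;> simp [h, h2]
  · exact LeC.refl κ
  · exact LeC.interL _ _

lemma nctxInter_le_right (Δ₁ Δ₂ : NCtx) : NCtxLe (nctxInter Δ₁ Δ₂) Δ₂ := by
  intro a κ h
  unfold nctxInter
  cases h1 : Δ₁ a <;> simp [h, h1]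
  · exact LeC.refl κ
  · exact LeC.interR _ _

lemma ctxLe_refl (Γ : Ctx) : CtxLe Γ Γ := fun _ δ h => ⟨δ, h, LeD.refl δ⟩

lemma nctxLe_refl (Δ : NCtx) : NCtxLe Δ Δ := fun _ κ h => ⟨κ, h, LeC.refl κ⟩

lemma ctxLe_update {Γ' Γ : Ctx} (h : CtxLe Γ' Γ) (x : ℕ) (δ : TyD) :
    CtxLe (Function.update Γ' x (some δ)) (Function.update Γ x (some δ)) := by
  intro y δy hy
  by_cases hyx : y = x
  · subst hyx
    simp [Function.update_self] at hy ⊢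
    subst hy; exact LeD.refl _
  · simp [Function.update_of_ne hyx] at hy ⊢
    exact h y δy hy

lemma nctxLe_update {Δ' Δ : NCtx} (h : NCtxLe Δ' Δ) (a : ℕ) (κ : TyC) :
    NCtxLe (Function.update Δ' a (some κ)) (Function.update Δ a (some κ)) := by
  intro b κb hb
  by_cases hba : b = a
  · subst hba
    simp [Function.update_self] at hb ⊢
    subst hb; exact LeC.refl _
  · simp [Function.update_of_ne hba] at hb ⊢
    exact h b κb hb

/-- Admissible weakening: typing is stable under strengthening of contexts. -/
theorem typ_weaken {Γ : Ctx} {M : Trm} {δ : TyD} {Δ : NCtx} (h : Typ Γ M δ Δ) :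
    ∀ Γ' Δ', CtxLe Γ' Γ → NCtxLe Δ' Δ → Typ Γ' M δ Δ' := by
  induction h with
  | ax Δ hx =>
      intro Γ' Δ' hΓ hΔ
      obtain ⟨δ', h1, h2⟩ := hΓ _ _ hx
      exact Typ.sub (Typ.ax Δ' h1) h2
  | abs _ ih =>
      intro Γ' Δ' hΓ hΔ
      exact Typ.abs (ih _ _ (ctxLe_update hΓ _ _) hΔ)
  | absOmega _ ih =>
      intro Γ' Δ' hΓ hΔ
      exact Typ.absOmega (ih _ _ (ctxLe_update hΓ _ _) hΔ)
  | app _ _ ih1 ih2 =>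
      intro Γ' Δ' hΓ hΔ
      exact Typ.app (ih1 _ _ hΓ hΔ) (ih2 _ _ hΓ hΔ)
  | appOmega _ _ ih1 ih2 =>
      intro Γ' Δ' hΓ hΔ
      exact Typ.appOmega (ih1 _ _ hΓ hΔ) (ih2 _ _ hΓ hΔ)
  | @muNe Γ M a b κ κ' Δ hab _ ih =>
      intro Γ' Δ' hΓ hΔ
      obtain ⟨κ'', hb, hle⟩ := hΔ b κ' (by simp [Function.update_self])
      have hΔ'eq : Δ' = Function.update Δ' b (some κ'') := by
        funext c
        by_cases hcb : c = b
        · subst hcb; simp [Function.update_self, hb]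
        · simp [Function.update_of_ne hcb]
      rw [hΔ'eq]
      apply Typ.muNe hab
      have hle' : NCtxLe (Function.update (Function.update Δ' b (some κ'')) a (some κ))
          (Function.update (Function.update Δ b (some κ')) a (some κ)) := by
        intro c κc hc
        by_cases hca : c = a
        · subst hca
          simp [Function.update_self] at hc ⊢
          subst hc; exact LeC.refl _
        · by_cases hcb : c = b
          · subst hcb
            simp [Function.update_of_ne hca, Function.update_self] at hc ⊢
            subst hc; exact hle
          · simp [Function.update_of_ne hca, Function.update_of_ne hcb] at hc ⊢
            exact hΔ c κc (by simp [Function.update_of_ne hcb, hc])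
      exact Typ.sub (ih _ _ hΓ hle') (LeD.arr hle)
  | muEq _ ih =>
      intro Γ' Δ' hΓ hΔ
      exact Typ.muEq (ih _ _ hΓ (nctxLe_update hΔ _ _))
  | sub _ hle ih =>
      intro Γ' Δ' hΓ hΔ
      exact Typ.sub (ih _ _ hΓ hΔ) hle
  | inter _ _ ih1 ih2 =>
      intro Γ' Δ' hΓ hΔ
      exact Typ.inter (ih1 _ _ hΓ hΔ) (ih2 _ _ hΓ hΔ)

/-- Typing an iterated application from a typed head. -/
lemma appList_typ {Γ : Ctx} {Δ : NCtx} (κ0 : TyC) :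
    ∀ (ps : List (Trm × TyD)) (M : Trm),
      Typ Γ M (.arr (ps.foldr (fun p k => .prod p.2 k) κ0)) Δ →
      (∀ p ∈ ps, Typ Γ p.1 p.2 Δ) →
      Typ Γ (appList M (ps.map Prod.fst)) (.arr κ0) Δ := by
  intro ps
  induction ps with
  | nil => intro M h _; simpa [appList] using h
  | cons p ps ih =>
      intro M h hall
      have hM : Typ Γ (.app M p.1) (.arr (ps.foldr (fun p k => .prod p.2 k) κ0)) Δ :=
        Typ.app h (hall p (by simp))
      have := ih (.app M p.1) hM (fun q hq => hall q (by simp [hq]))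
      simpa [appList, List.foldl] using this

/-- Combine separately typed terms into a common pair of contexts. -/
lemma combine (Ns : List Trm)
    (h : ∀ N ∈ Ns, ∃ (Γ : Ctx) (Δ : NCtx) (κ : TyC), Typ Γ N (.arr κ) Δ) :
    ∃ (Γ : Ctx) (Δ : NCtx) (ps : List (Trm × TyD)),
      ps.map Prod.fst = Ns ∧ ∀ p ∈ ps, Typ Γ p.1 p.2 Δ := by
  induction Ns with
  | nil => exact ⟨fun _ => none, fun _ => none, [], rfl, by simp⟩
  | cons N Ns ih =>
      obtain ⟨Γ₁, Δ₁, κ, hN⟩ := h N (by simp)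
      obtain ⟨Γ₂, Δ₂, ps, hps, hall⟩ := ih (fun P hP => h P (by simp [hP]))
      refine ⟨ctxInter Γ₁ Γ₂, nctxInter Δ₁ Δ₂, (N, .arr κ) :: ps, by simp [hps], ?_⟩
      intro p hp
      rcases List.mem_cons.1 hp with hp | hp
      · subst hp
        exact typ_weaken hN _ _ (ctxInter_le_left _ _) (nctxInter_le_left _ _)
      · exact typ_weaken (hall p hp) _ _ (ctxInter_le_right _ _) (nctxInter_le_right _ _)

end Aux

/-- Every normal form is typeable (with a type of the shape κ→ν). -/
theorem normal_forms_typeable {N : Trm} (h : Nf N) :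
    ∃ (Γ : Ctx) (Δ : NCtx) (κ : TyC), Typ Γ N (.arr κ) Δ := by
  induction h with
  | varApp x Ns hNs ih =>
      obtain ⟨Γ, Δ, ps, hps, hall⟩ := combine Ns ih
      set stack : TyC := ps.foldr (fun p k => .prod p.2 k) (.prodOmega .nu) with hstack
      -- context giving x the type arr stack (intersected with any existing type)
      set δx : TyD := match Γ x with
        | some δ₀ => .inter (.arr stack) δ₀
        | none => .arr stack with hδx
      set Γ' : Ctx := Function.update Γ x (some δx) with hΓ'
      have hΓ'le : CtxLe Γ' Γ := by
        intro y δy hy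
        by_cases hyx : y = x
        · subst hyx
          refine ⟨δx, by simp [hΓ', Function.update_self], ?_⟩
          simp only [hδx, hy]
          exact LeD.interR _ _
        · exact ⟨δy, by simp [hΓ', Function.update_of_ne hyx, hy], LeD.refl _⟩
      have hvar : Typ Γ' (.var x) (.arr stack) Δ := by
        have hax : Typ Γ' (.var x) δx Δ :=
          Typ.ax Δ (by simp [hΓ', Function.update_self])
        cases hΓx : Γ x with
        | some δ₀ =>
            exact Typ.sub hax (by simp only [hδx, hΓx]; exact LeD.interL _ _)
        | none =>
            have : δx = .arr stack := by simp [hδx, hΓx]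
            exact this ▸ hax
      have := appList_typ (.prodOmega .nu) ps (.var x) hvar
        (fun p hp => typ_weaken (hall p hp) _ _ hΓ'le (nctxLe_refl Δ))
      rw [hps] at this
      exact ⟨Γ', Δ, .prodOmega .nu, this⟩
  | lam x hM ih =>
      obtain ⟨Γ, Δ, κ, hM'⟩ := ih
      set δ : TyD := match Γ x with
        | some δ₀ => δ₀
        | none => .nu with hδ
      have hle : CtxLe (Function.update Γ x (some δ)) Γ := by
        intro y δy hy
        by_cases hyx : y = x
        · subst hyx
          refine ⟨δ, by simp [Function.update_self], ?_⟩
          simp only [hδ, hy]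
          exact LeD.refl _
        · exact ⟨δy, by simp [Function.update_of_ne hyx, hy], LeD.refl _⟩
      exact ⟨Γ, Δ, .prod δ κ,
        Typ.abs (typ_weaken hM' _ _ hle (nctxLe_refl Δ))⟩
  | mu a b hM ih =>
      obtain ⟨Γ, Δ, κ, hM'⟩ := ih
      by_cases hab : a = b
      · subst hab
        -- pick κ₀ ≤ κ compatible with Δ a
        set κ₀ : TyC := match Δ a with
          | some κ₁ => .inter κ κ₁
          | none => κ with hκ₀
        have hκ₀κ : LeC κ₀ κ := by
          cases hΔa : Δ a <;> simp only [hκ₀, hΔa]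
          · exact LeC.refl κ
          · exact LeC.interL _ _
        have hle : NCtxLe (Function.update Δ a (some κ₀)) Δ := by
          intro c κc hc
          by_cases hca : c = a
          · subst hca
            refine ⟨κ₀, by simp [Function.update_self], ?_⟩
            simp only [hκ₀, hc]
            exact LeC.interR _ _
          · exact ⟨κc, by simp [Function.update_of_ne hca, hc], LeC.refl _⟩
        refine ⟨Γ, Δ, κ₀, Typ.muEq ?_⟩
        exact Typ.sub (typ_weaken hM' _ _ (ctxLe_refl Γ) hle) (LeD.arr hκ₀κ)
      · -- a ≠ b
        set κ' : TyC := match Δ b with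
          | some κ₁ => .inter κ κ₁
          | none => κ with hκ'
        set κc : TyC := match Δ a with
          | some κ₂ => κ₂
          | none => .prodOmega .nu with hκc
        have hκ'κ : LeC κ' κ := by
          cases hΔb : Δ b <;> simp only [hκ', hΔb]
          · exact LeC.refl κ
          · exact LeC.interL _ _
        have hle : NCtxLe (Function.update (Function.update Δ b (some κ')) a (some κc)) Δ := by
          intro c κ₃ hc
          by_cases hca : c = a
          · subst hca
            refine ⟨κc, by simp [Function.update_self], ?_⟩
            simp only [hκc, hc]
            exact LeC.refl _
          · by_cases hcb : c = b
            · subst hcb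
              refine ⟨κ', by simp [Function.update_of_ne hca, Function.update_self], ?_⟩
              simp only [hκ', hc]
              exact LeC.interR _ _
            · exact ⟨κ₃, by simp [Function.update_of_ne hca, Function.update_of_ne hcb, hc],
                LeC.refl _⟩
        refine ⟨Γ, Function.update Δ b (some κ'), κc, Typ.muNe hab ?_⟩
        exact Typ.sub (typ_weaken hM' _ _ (ctxLe_refl Γ) hle) (LeD.arr hκ'κ)
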